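/- arXiv:2512.08114 — 2 statements merged into one kernel-verified Lean document; each statement's English description precedes it below -/
import Mathlib

section
/- For every pair of countable ordinals α, β < ω₁ and scalar field 𝕜 ∈ {ℝ, ℂ}, there exists a map U : C([1, ω^α]) × C([1, ω^β]) → C([1, ω^{α⊕β}]) satisfying: (i) U(f₁+f₂, g₁+g₂) = U(f₁,g₁) + U(f₂,g₂) for all f₁, f₂ ∈ C([1, ω^α]) and g₁, g₂ ∈ C([1, ω^β]); (ii) U(λf, λg) = λ·U(f,g) for every λ ∈ ℝ; (iii) ‖U(f,g)‖ ≤ (1/2)(‖f‖ + ‖g‖); (iv) for every s ∈ [1, ω^α] and t ∈ [1, ω^β] there exists r_{s,t} ∈ [1, ω^{α⊕β}] such that U(f,g)(r_{s,t}) = (1/2)(f(s) + g(t)) for all f, g; (v) for every r ∈ [1, ω^{α⊕β}] there exist s_r ∈ [1, ω^α] and t_r ∈ [1, ω^β] such that U(f,g)(r) = (1/2)(f(s_r) + g(t_r)) for all f, g. -/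
/-!
The map is `U f g = (f ∘ p + g ∘ q) / 2` for a continuous surjection
`(p, q) : [1, ω ^ (α ♯ β)] → [1, ω ^ α] × [1, ω ^ β]`; properties (i)–(v) are immediate from it.

The surjection is built by induction on `(α, β)`. Enumerate the ordinals below `α` and below `β`,
each infinitely often, as `eα n` and `eβ n`, and let `a n = ω ^ eα 0 + ⋯ + ω ^ eα (n - 1)` and
`b n` likewise; they increase to `ω ^ α` and `ω ^ β`. The box minus its top corner is covered by
the rectangles `(a n, a (n + 1)] × (b n, ω ^ β]` and `(a n, ω ^ α] × (b n, b (n + 1)]`, which by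
induction are images of `[1, ω ^ (eα n ♯ β)]` and `[1, ω ^ (α ♯ eβ n)]`. Laid end to end, these
intervals fill `[1, ω ^ (α ♯ β))`, since every ordinal below `α ♯ β` is at most some `α' ♯ β` or
`α ♯ β'` with `α' < α`, `β' < β`; the glued map is continuous at `ω ^ (α ♯ β)` because the corners
`(a n, b n)` converge to the top corner of the box.
-/

open scoped ZeroAtInfty

/-- Natural (Hessenberg) addition of ordinals, as in the former `Mathlib.SetTheory.Ordinal.NaturalOps`
(removed from Mathlib). -/
noncomputable def Ordinal.nadd : Ordinal.{u} → Ordinal.{u} → Ordinal.{u}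
  | a, b =>
    max (Ordinal.blsub.{u, u} a fun a' _ => Ordinal.nadd a' b)
      (Ordinal.blsub.{u, u} b fun b' _ => Ordinal.nadd a b')
termination_by a b => (a, b)

infixl:65 " ♯ " => Ordinal.nadd

noncomputable section

/-- The pointwise modulus of a continuous function, as a real-valued continuous function. -/
def cmAbs {K : Type*} [TopologicalSpace K] {𝕜 : Type*} [RCLike 𝕜]
    (f : C(K, 𝕜)) : C(K, ℝ) :=
  ⟨fun x => ‖f x‖, (map_continuous f).norm⟩

/-- `inf_{‖λ‖ = 1} ‖f - λ • g‖`. -/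
def sprInf {K : Type*} [TopologicalSpace K] [CompactSpace K] {𝕜 : Type*} [RCLike 𝕜]
    (f g : C(K, 𝕜)) : ℝ :=
  ⨅ l : {c : 𝕜 // ‖c‖ = 1}, ‖f - (l : 𝕜) • g‖

/-- A subspace `E ⊆ C(K, 𝕜)` does `C`-stable phase retrieval. -/
def DoesCSPR {K : Type*} [TopologicalSpace K] [CompactSpace K] {𝕜 : Type*} [RCLike 𝕜]
    (E : Submodule 𝕜 C(K, 𝕜)) (C : ℝ) : Prop :=
  ∀ f ∈ E, ∀ g ∈ E, sprInf f g ≤ C * ‖cmAbs f - cmAbs g‖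

/-- A subspace `E ⊆ C(K, 𝕜)` does stable phase retrieval. -/
def DoesSPR {K : Type*} [TopologicalSpace K] [CompactSpace K] {𝕜 : Type*} [RCLike 𝕜]
    (E : Submodule 𝕜 C(K, 𝕜)) : Prop :=
  ∃ C : ℝ, 1 ≤ C ∧ DoesCSPR E C

/-- Ordinal intervals `[a, b]` (with the order topology of the ordinals) are compact spaces. -/
instance ordIccCompact (a b : Ordinal.{0}) : CompactSpace (Set.Icc a b) :=
  isCompact_iff_compactSpace.mp isCompact_Icc

/-- The Cantor–Bendixson derivatives of a topological space: `cbDeriv K 0 = K`,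
`cbDeriv K (o+1)` is the derived set (set of accumulation points) of `cbDeriv K o`, and at
limit ordinals one takes intersections. -/
def cbDeriv (K : Type*) [TopologicalSpace K] (o : Ordinal.{0}) : Set K :=
  Ordinal.limitRecOn o Set.univ (fun _ ih => derivedSet ih)
    (fun o _ ih => ⋂ b : Set.Iio o, ih b b.2)

open Set Filter Topology

theorem Set.Countable.exists_seq_frequently_eq {X : Type*} {S : Set X} (hS : S.Countable)
    (hne : S.Nonempty) : ∃ e : ℕ → X, (∀ n, e n ∈ S) ∧ ∀ x ∈ S, ∃ᶠ n in atTop, e n = x := by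
  obtain ⟨f, rfl⟩ := hS.exists_eq_range hne
  refine ⟨fun n => f n.unpair.1, fun n => mem_range_self _, ?_⟩
  rintro _ ⟨i, rfl⟩
  exact frequently_atTop.2 fun N => ⟨Nat.pair i N, Nat.right_le_pair i N, by simp⟩

theorem SuccOrder.isOpen_Ioc {X : Type*} [LinearOrder X] [TopologicalSpace X] [OrderTopology X]
    [SuccOrder X] [NoMaxOrder X] (a b : X) : IsOpen (Ioc a b) := by
  rw [← Ioi_inter_Iic, ← Order.Iio_succ]
  exact isOpen_Ioi.inter isOpen_Iio

theorem exists_mem_Ioc_of_lt_iSup {X : Type*} [ConditionallyCompleteLinearOrder X] {c : ℕ → X}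
    {x : X} (h0 : c 0 < x) (hx : x < ⨆ m, c m) : ∃ m, x ∈ Ioc (c m) (c (m + 1)) := by
  obtain ⟨n, hn⟩ := exists_lt_of_lt_ciSup hx
  obtain ⟨m, hm, hm'⟩ :=
    Nat.exists_not_and_succ_of_not_zero_of_exists (p := fun n => x ≤ c n) h0.not_ge ⟨n, hn.le⟩
  exact ⟨m, not_le.1 hm, hm'⟩

theorem exists_lt_and_le_succ_or {X : Type*} [LinearOrder X] [TopologicalSpace X]
    [ClosedIicTopology X] {a b : ℕ → X} {s t A B : X} (ha : Tendsto a atTop (𝓝 A))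
    (hb : Tendsto b atTop (𝓝 B)) (hs : a 0 < s) (ht : b 0 < t) (h : s < A ∨ t < B) :
    ∃ n, (a n < s ∧ b n < t) ∧ (s ≤ a (n + 1) ∨ t ≤ b (n + 1)) := by
  have hex : ∃ n, s ≤ a n ∨ t ≤ b n := by
    rcases h with h | h
    · exact (ha.eventually_const_lt h).exists.imp fun _ h => .inl h.le
    · exact (hb.eventually_const_lt h).exists.imp fun _ h => .inr h.le
  obtain ⟨n, hn, hn'⟩ := Nat.exists_not_and_succ_of_not_zero_of_exists
    (p := fun n => s ≤ a n ∨ t ≤ b n) (by simp [hs, ht]) hex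
  simp only [not_or, not_le] at hn
  exact ⟨n, hn, hn'⟩

section interleave

variable {X : Type*}

def interleave (u v : ℕ → X) (m : ℕ) : X :=
  if Even m then u (m / 2) else v (m / 2)

@[simp] theorem interleave_two_mul (u v : ℕ → X) (n : ℕ) : interleave u v (2 * n) = u n := by
  simp [interleave]

@[simp] theorem interleave_two_mul_add_one (u v : ℕ → X) (n : ℕ) :
    interleave u v (2 * n + 1) = v n := by
  simp only [interleave, Nat.not_even_bit1, if_false]
  congr 1
  omega

theorem Filter.Tendsto.interleave {u v : ℕ → X} {l : Filter X} (hu : Tendsto u atTop l)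
    (hv : Tendsto v atTop l) : Tendsto (interleave u v) atTop l :=
  have h := Nat.tendsto_div_const_atTop two_ne_zero
  ((hu.comp h).mono_left inf_le_left).if ((hv.comp h).mono_left inf_le_left)

theorem frequently_interleave_left {u v : ℕ → X} {P : X → Prop} (h : ∃ᶠ n in atTop, P (u n)) :
    ∃ᶠ m in atTop, P (interleave u v m) :=
  (strictMono_mul_left_of_pos two_pos).tendsto_atTop.frequently (by simpa using h)

theorem frequently_interleave_right {u v : ℕ → X} {P : X → Prop} (h : ∃ᶠ n in atTop, P (v n)) :
    ∃ᶠ m in atTop, P (interleave u v m) :=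
  ((strictMono_mul_left_of_pos two_pos).add_const 1).tendsto_atTop.frequently (by simpa using h)

end interleave

namespace Ordinal

section nadd

set_option linter.deprecated false

theorem nadd_def (a b : Ordinal.{u}) :
    a ♯ b = max (blsub.{u, u} a fun a' _ => a' ♯ b) (blsub.{u, u} b fun b' _ => a ♯ b') := by
  rw [nadd]

theorem lt_nadd_iff {a b c : Ordinal.{u}} :
    a < b ♯ c ↔ (∃ b' < b, a ≤ b' ♯ c) ∨ ∃ c' < c, a ≤ b ♯ c' := by
  simp only [nadd_def b c, lt_max_iff, lt_blsub_iff, exists_prop]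

theorem nadd_lt_nadd_right {b c : Ordinal.{u}} (h : b < c) (a : Ordinal.{u}) : b ♯ a < c ♯ a := by
  rw [nadd_def c a]
  exact lt_max_of_lt_left (lt_blsub.{u, u} (fun a' _ => a' ♯ a) b h)

theorem nadd_lt_nadd_left {b c : Ordinal.{u}} (h : b < c) (a : Ordinal.{u}) : a ♯ b < a ♯ c := by
  rw [nadd_def a c]
  exact lt_max_of_lt_right (lt_blsub.{u, u} (fun b' _ => a ♯ b') b h)

theorem nadd_zero (a : Ordinal.{u}) : a ♯ 0 = a := by
  induction a using WellFoundedLT.induction with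
  | _ a ih =>
    rw [nadd_def, blsub_zero, max_eq_left zero_le]
    conv_rhs => rw [← blsub_id a]
    exact congrArg _ (funext₂ fun a' h => ih a' h)

theorem zero_nadd (a : Ordinal.{u}) : 0 ♯ a = a := by
  induction a using WellFoundedLT.induction with
  | _ a ih =>
    rw [nadd_def, blsub_zero, max_eq_right zero_le]
    conv_rhs => rw [← blsub_id a]
    exact congrArg _ (funext₂ fun a' h => ih a' h)

end nadd

theorem countable_Iio {o : Ordinal.{u}} (ho : o.card ≤ Cardinal.aleph0) : (Iio o).Countable := by
  rw [← countable_coe_iff, ← Cardinal.mk_le_aleph0_iff, Cardinal.mk_Iio_ordinal]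
  exact Cardinal.lift_le_aleph0.2 ho

theorem one_le_omega0_opow (α : Ordinal.{u}) : 1 ≤ ω ^ α :=
  Order.one_le_iff_pos.2 (opow_pos _ omega0_pos)

theorem continuous_sub_const (c : Ordinal.{u}) : Continuous (· - c) := by
  refine continuous_iff_continuousAt.2 fun x => tendsto_order.2 ⟨fun l hl => ?_, fun u hu => ?_⟩
  · filter_upwards [isOpen_Ioi.mem_nhds (lt_sub.1 hl)] with y hy using lt_sub.2 hy
  · have hx : x < c + u := (le_add_sub x c).trans_lt (add_lt_add_right hu c)
    filter_upwards [isOpen_Iio.mem_nhds hx] with y hy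
      using sub_lt_of_lt_add hy (zero_le.trans_lt hu)

theorem add_mem_Ioc_of_mem_Icc_one {a d y : Ordinal.{u}} (hy : y ∈ Icc 1 d) :
    a + y ∈ Ioc a (a + d) :=
  ⟨lt_add_of_pos_right _ (zero_lt_one.trans_le hy.1), add_le_add_right hy.2 _⟩

theorem sub_mem_Icc_one_of_mem_Ioc {a d s : Ordinal.{u}} (hs : s ∈ Ioc a (a + d)) :
    s - a ∈ Icc 1 d :=
  ⟨Order.one_le_iff_pos.2 (lt_sub.2 (by simpa using hs.1)), sub_le.2 hs.2⟩

def sumOpow (e : ℕ → Ordinal.{u}) : ℕ → Ordinal.{u}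
  | 0 => 0
  | n + 1 => sumOpow e n + ω ^ e n

theorem sumOpow_succ (e : ℕ → Ordinal.{u}) (n : ℕ) :
    sumOpow e (n + 1) = sumOpow e n + ω ^ e n := rfl

theorem strictMono_sumOpow (e : ℕ → Ordinal.{u}) : StrictMono (sumOpow e) :=
  strictMono_nat_of_lt_succ fun _ => lt_add_of_pos_right _ (opow_pos _ omega0_pos)

theorem sumOpow_lt_opow {e : ℕ → Ordinal.{u}} {γ : Ordinal.{u}} (he : ∀ n, e n < γ) (n : ℕ) :
    sumOpow e n < ω ^ γ := by
  induction n with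
  | zero => exact opow_pos _ omega0_pos
  | succ n ih =>
    exact isPrincipal_add_omega0_opow γ ih ((opow_lt_opow_iff_right one_lt_omega0).2 (he n))

theorem tendsto_sumOpow {e : ℕ → Ordinal.{u}} {γ : Ordinal.{u}} (he : ∀ n, e n < γ)
    (hfreq : ∀ x < γ, ∃ᶠ n in atTop, x ≤ e n) : Tendsto (sumOpow e) atTop (𝓝 (ω ^ γ)) := by
  suffices ⨆ n, sumOpow e n = ω ^ γ from
    this ▸ tendsto_atTop_ciSup (strictMono_sumOpow e).monotone bddAbove_of_small
  refine le_antisymm (ciSup_le fun n => (sumOpow_lt_opow he n).le) (le_of_forall_lt fun δ hδ => ?_)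
  obtain ⟨x, hx, k, hk⟩ := (lt_omega0_opow (he 0).ne_bot).1 hδ
  have hreach : ∀ k : ℕ, ∃ n, ω ^ x * k ≤ sumOpow e n := by
    intro k
    induction k with
    | zero => exact ⟨0, by simp⟩
    | succ k ih =>
      obtain ⟨n, hn⟩ := ih
      obtain ⟨m, hnm, hxm⟩ := (hfreq x hx).forall_exists_of_atTop n
      refine ⟨m + 1, ?_⟩
      rw [Nat.cast_succ, mul_add_one, sumOpow_succ]
      exact add_le_add (hn.trans ((strictMono_sumOpow e).monotone hnm))
        (opow_le_opow_right omega0_pos hxm)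
  obtain ⟨n, hn⟩ := hreach k
  exact hk.trans_le (hn.trans (le_ciSup bddAbove_of_small n))

section glueIoc

variable {X : Type*} {c : ℕ → Ordinal.{u}} {f : ℕ → Ordinal.{u} → X} {v : X} {x : Ordinal.{u}}

open scoped Classical in
def glueIoc (c : ℕ → Ordinal.{u}) (f : ℕ → Ordinal.{u} → X) (v : X) (x : Ordinal.{u}) : X :=
  if h : ∃ m, x ≤ c (m + 1) then f (Nat.find h) x else v

theorem glueIoc_of_mem_Ioc (hc : Monotone c) {m : ℕ} (hx : x ∈ Ioc (c m) (c (m + 1))) :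
    glueIoc c f v x = f m x := by
  have h : ∃ k, x ≤ c (k + 1) := ⟨m, hx.2⟩
  have hfind : Nat.find h = m :=
    (Nat.find_eq_iff h).2 ⟨hx.2, fun k hk hxk => (hxk.trans (hc hk)).not_gt hx.1⟩
  rw [glueIoc, dif_pos h, hfind]

theorem glueIoc_of_forall_lt (hx : ∀ m, c m < x) : glueIoc c f v x = v := by
  rw [glueIoc, dif_neg]
  push Not
  exact fun m => hx (m + 1)

theorem glueIoc_mem {S : Set X} (hf : ∀ m y, f m y ∈ S) (hv : v ∈ S) (x : Ordinal.{u}) :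
    glueIoc c f v x ∈ S := by
  unfold glueIoc
  split_ifs
  exacts [hf _ _, hv]

theorem continuous_glueIoc [TopologicalSpace X] (hc : StrictMono c) (hc0 : c 0 = 0)
    (hf : ∀ m, Continuous (f m)) (hlim : ∀ U ∈ 𝓝 v, ∀ᶠ m in atTop, ∀ y, f m y ∈ U) :
    Continuous (glueIoc c f v) := by
  set L := ⨆ m, c m
  have hcL : ∀ m, c m < L := fun m =>
    (hc (Nat.lt_succ_self m)).trans_le (le_ciSup bddAbove_of_small _)
  refine continuous_iff_continuousAt.2 fun x => ?_
  by_cases hx₀ : Order.IsSuccLimit x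
  swap
  · rw [ContinuousAt, SuccOrder.nhds_eq_pure.2 hx₀]
    exact tendsto_pure_nhds _ _
  rcases lt_trichotomy x L with hx | rfl | hx
  · obtain ⟨m, hm⟩ := exists_mem_Ioc_of_lt_iSup (hc0 ▸ hx₀.bot_lt) hx
    have heq : glueIoc c f v =ᶠ[𝓝 x] f m := eventually_of_mem
      ((SuccOrder.isOpen_Ioc _ _).mem_nhds hm) fun y hy => glueIoc_of_mem_Ioc hc.monotone hy
    exact (hf m).continuousAt.congr heq.symm
  · rw [ContinuousAt, glueIoc_of_forall_lt hcL, tendsto_def]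
    intro U hU
    obtain ⟨N, hN⟩ := (hlim U hU).exists_forall_of_atTop
    filter_upwards [isOpen_Ioi.mem_nhds (hcL N)] with y hy
    rcases lt_or_ge y L with hyL | hyL
    · obtain ⟨m, hm⟩ := exists_mem_Ioc_of_lt_iSup ((hc.monotone N.zero_le).trans_lt hy) hyL
      have hNm : N ≤ m := by
        by_contra! h
        exact (hm.2.trans (hc.monotone h)).not_gt hy
      rw [mem_preimage, glueIoc_of_mem_Ioc hc.monotone hm]
      exact hN m hNm y
    · rw [mem_preimage, glueIoc_of_forall_lt fun m => (hcL m).trans_le hyL]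
      exact mem_of_mem_nhds hU
  · have heq : glueIoc c f v =ᶠ[𝓝 x] fun _ => v :=
      eventually_of_mem (isOpen_Ioi.mem_nhds hx) fun y hy =>
        glueIoc_of_forall_lt fun m => (hcL m).trans hy
    exact continuousAt_const.congr heq.symm

end glueIoc

def opowBox (α β : Ordinal.{u}) : Set (Ordinal.{u} × Ordinal.{u}) :=
  Icc 1 (ω ^ α) ×ˢ Icc 1 (ω ^ β)

/-- A continuous surjection `[1, ω ^ γ] → [1, ω ^ α] × [1, ω ^ β]`, taken as a map on all ordinals
so that such maps can be translated and glued. -/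
def CoversOpowBox (γ α β : Ordinal.{u}) : Prop :=
  ∃ π : Ordinal.{u} → Ordinal.{u} × Ordinal.{u},
    Continuous π ∧ (∀ x, π x ∈ opowBox α β) ∧ SurjOn π (Icc 1 (ω ^ γ)) (opowBox α β)

theorem CoversOpowBox.symm {γ α β : Ordinal.{u}} (h : CoversOpowBox γ α β) :
    CoversOpowBox γ β α := by
  obtain ⟨π, hπ_cont, hπ_mem, hπ_surj⟩ := h
  refine ⟨Prod.swap ∘ π, continuous_swap.comp hπ_cont, fun x => (hπ_mem x).symm, ?_⟩
  rintro ⟨t, s⟩ hts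
  obtain ⟨x, hx, hπx⟩ := hπ_surj (show (s, t) ∈ opowBox α β from ⟨hts.2, hts.1⟩)
  exact ⟨x, hx, by simp [hπx]⟩

theorem coversOpowBox_self_zero (α : Ordinal.{u}) : CoversOpowBox α α 0 := by
  refine ⟨fun x => (projIcc 1 (ω ^ α) (one_le_omega0_opow α) x, 1),
    (continuous_subtype_val.comp continuous_projIcc).prodMk continuous_const,
    fun x => ⟨Subtype.prop _, by simp⟩, ?_⟩
  rintro ⟨s, t⟩ ⟨hs, ht⟩
  refine ⟨s, hs, ?_⟩
  simp only [opow_zero, Icc_self, mem_singleton_iff] at ht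
  simp [projIcc_of_mem _ hs, ht]

theorem CoversOpowBox.exists_surjective {γ α β : Ordinal.{u}} (h : CoversOpowBox γ α β) :
    ∃ π : C(Icc (1 : Ordinal.{u}) (ω ^ γ), Icc (1 : Ordinal.{u}) (ω ^ α) × Icc 1 (ω ^ β)),
      Function.Surjective π := by
  obtain ⟨π, hπ_cont, hπ_mem, hπ_surj⟩ := h
  have hπ' : Continuous fun x : Icc (1 : Ordinal.{u}) (ω ^ γ) => π x :=
    hπ_cont.comp continuous_subtype_val
  refine ⟨⟨fun x => (⟨(π x).1, (hπ_mem x).1⟩, ⟨(π x).2, (hπ_mem x).2⟩),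
    ((continuous_fst.comp hπ').subtype_mk _).prodMk ((continuous_snd.comp hπ').subtype_mk _)⟩, ?_⟩
  rintro ⟨⟨s, hs⟩, ⟨t, ht⟩⟩
  obtain ⟨x, hx, hπx⟩ := hπ_surj (show (s, t) ∈ opowBox α β from ⟨hs, ht⟩)
  exact ⟨⟨x, hx⟩, by simp [hπx]⟩

theorem CoversOpowBox.exists_translate {ζ σ τ : Ordinal.{u}} (h : CoversOpowBox ζ σ τ)
    (c A B : Ordinal.{u}) :
    ∃ f : Ordinal.{u} → Ordinal.{u} × Ordinal.{u}, Continuous f ∧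
      (∀ x, f x ∈ Ioc A (A + ω ^ σ) ×ˢ Ioc B (B + ω ^ τ)) ∧
      SurjOn f (Ioc c (c + ω ^ ζ)) (Ioc A (A + ω ^ σ) ×ˢ Ioc B (B + ω ^ τ)) := by
  obtain ⟨π, hπ_cont, hπ_mem, hπ_surj⟩ := h
  have hπc := hπ_cont.comp (continuous_sub_const c)
  refine ⟨fun x => (A + (π (x - c)).1, B + (π (x - c)).2),
    ((isNormal_add_right A).continuous.comp (continuous_fst.comp hπc)).prodMk
      ((isNormal_add_right B).continuous.comp (continuous_snd.comp hπc)),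
    fun x => ⟨add_mem_Ioc_of_mem_Icc_one (hπ_mem _).1, add_mem_Ioc_of_mem_Icc_one (hπ_mem _).2⟩,
    ?_⟩
  rintro ⟨s, t⟩ ⟨hs, ht⟩
  obtain ⟨y, hy, hπy⟩ := hπ_surj (show (s - A, t - B) ∈ opowBox σ τ from
    ⟨sub_mem_Icc_one_of_mem_Ioc hs, sub_mem_Icc_one_of_mem_Ioc ht⟩)
  refine ⟨c + y, add_mem_Ioc_of_mem_Icc_one hy, ?_⟩
  simp only [Ordinal.add_sub_cancel, hπy, Ordinal.add_sub_cancel_of_le hs.1.le,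
    Ordinal.add_sub_cancel_of_le ht.1.le]

theorem coversOpowBox_of_pieces {γ α β : Ordinal.{u}} {ζ σ τ A B : ℕ → Ordinal.{u}}
    (hζ : Tendsto (sumOpow ζ) atTop (𝓝 (ω ^ γ))) (hpiece : ∀ m, CoversOpowBox (ζ m) (σ m) (τ m))
    (hA : ∀ m, A m + ω ^ σ m ≤ ω ^ α) (hB : ∀ m, B m + ω ^ τ m ≤ ω ^ β)
    (hA_lim : Tendsto A atTop (𝓝 (ω ^ α))) (hB_lim : Tendsto B atTop (𝓝 (ω ^ β)))
    (hcover : ∀ p ∈ opowBox α β, p ≠ (ω ^ α, ω ^ β) →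
      ∃ m, p ∈ Ioc (A m) (A m + ω ^ σ m) ×ˢ Ioc (B m) (B m + ω ^ τ m)) :
    CoversOpowBox γ α β := by
  set c := sumOpow ζ
  choose f hf_cont hf_mem hf_surj using fun m => (hpiece m).exists_translate (c m) (A m) (B m)
  have hc_le : ∀ m, c m ≤ ω ^ γ := (strictMono_sumOpow ζ).monotone.ge_of_tendsto hζ
  have hc_lt : ∀ m, c m < ω ^ γ := fun m =>
    (strictMono_sumOpow ζ (Nat.lt_succ_self m)).trans_le (hc_le (m + 1))
  have hf_box : ∀ m y, f m y ∈ opowBox α β := fun m y =>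
    have ⟨⟨hs₁, hs₂⟩, ht₁, ht₂⟩ := hf_mem m y
    ⟨⟨Order.one_le_iff_pos.2 (zero_le.trans_lt hs₁), hs₂.trans (hA m)⟩,
      Order.one_le_iff_pos.2 (zero_le.trans_lt ht₁), ht₂.trans (hB m)⟩
  have htop : (ω ^ α, ω ^ β) ∈ opowBox α β :=
    ⟨⟨one_le_omega0_opow α, le_rfl⟩, one_le_omega0_opow β, le_rfl⟩
  refine ⟨glueIoc c f (ω ^ α, ω ^ β), continuous_glueIoc (strictMono_sumOpow ζ) rfl hf_cont ?_,
    glueIoc_mem hf_box htop, ?_⟩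
  · intro U hU
    obtain ⟨U₁, hU₁, U₂, hU₂, hU⟩ := mem_nhds_prod_iff.1 hU
    obtain ⟨l₁, hl₁, hI₁⟩ := exists_Ioc_subset_of_mem_nhds hU₁ ⟨0, opow_pos _ omega0_pos⟩
    obtain ⟨l₂, hl₂, hI₂⟩ := exists_Ioc_subset_of_mem_nhds hU₂ ⟨0, opow_pos _ omega0_pos⟩
    filter_upwards [hA_lim.eventually_const_lt hl₁, hB_lim.eventually_const_lt hl₂] with m hm₁ hm₂ y
    obtain ⟨⟨hs₁, -⟩, ht₁, -⟩ := hf_mem m y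
    exact hU ⟨hI₁ ⟨hm₁.trans hs₁, (hf_box m y).1.2⟩, hI₂ ⟨hm₂.trans ht₁, (hf_box m y).2.2⟩⟩
  · intro p hp
    by_cases hp_top : p = (ω ^ α, ω ^ β)
    · exact ⟨ω ^ γ, ⟨one_le_omega0_opow γ, le_rfl⟩, hp_top ▸ glueIoc_of_forall_lt hc_lt⟩
    obtain ⟨m, hm⟩ := hcover p hp hp_top
    obtain ⟨x, hx, rfl⟩ := hf_surj m hm
    exact ⟨x, ⟨Order.one_le_iff_pos.2 (zero_le.trans_lt hx.1), hx.2.trans (hc_le (m + 1))⟩,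
      glueIoc_of_mem_Ioc (strictMono_sumOpow ζ).monotone hx⟩

theorem coversOpowBox_nadd_of_forall_lt {α β : Ordinal.{u}} (hα : (Iio α).Countable)
    (hβ : (Iio β).Countable) (hα0 : 0 < α) (hβ0 : 0 < β)
    (hleft : ∀ α' < α, CoversOpowBox (α' ♯ β) α' β)
    (hright : ∀ β' < β, CoversOpowBox (α ♯ β') α β') : CoversOpowBox (α ♯ β) α β := by
  obtain ⟨eα, heα, heα_freq⟩ := hα.exists_seq_frequently_eq ⟨0, hα0⟩
  obtain ⟨eβ, heβ, heβ_freq⟩ := hβ.exists_seq_frequently_eq ⟨0, hβ0⟩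
  set a := sumOpow eα
  set b := sumOpow eβ
  have ha : Tendsto a atTop (𝓝 (ω ^ α)) :=
    tendsto_sumOpow heα fun x hx => (heα_freq x hx).mono fun _ h => h.ge
  have hb : Tendsto b atTop (𝓝 (ω ^ β)) :=
    tendsto_sumOpow heβ fun x hx => (heβ_freq x hx).mono fun _ h => h.ge
  set ζ := interleave (fun n => eα n ♯ β) fun n => α ♯ eβ n
  set σ := interleave eα fun _ => α
  set τ := interleave (fun _ => β) eβ
  have hpiece : ∀ m, ζ m < α ♯ β ∧ CoversOpowBox (ζ m) (σ m) (τ m) ∧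
      interleave a a m + ω ^ σ m ≤ ω ^ α ∧ interleave b b m + ω ^ τ m ≤ ω ^ β := by
    intro m
    obtain ⟨n, rfl | rfl⟩ := Nat.even_or_odd' m <;>
      simp only [ζ, σ, τ, interleave_two_mul, interleave_two_mul_add_one]
    · exact ⟨nadd_lt_nadd_right (heα n) β, hleft _ (heα n), (sumOpow_lt_opow heα (n + 1)).le,
        (add_omega0_opow (sumOpow_lt_opow heβ n)).le⟩
    · exact ⟨nadd_lt_nadd_left (heβ n) α, hright _ (heβ n),
        (add_omega0_opow (sumOpow_lt_opow heα n)).le, (sumOpow_lt_opow heβ (n + 1)).le⟩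
  refine coversOpowBox_of_pieces (tendsto_sumOpow (fun m => (hpiece m).1) ?freq)
    (fun m => (hpiece m).2.1) (fun m => (hpiece m).2.2.1) (fun m => (hpiece m).2.2.2)
    (ha.interleave ha) (hb.interleave hb) ?cover
  case freq =>
    intro x hx
    rcases lt_nadd_iff.1 hx with ⟨α', hα', hxα'⟩ | ⟨β', hβ', hxβ'⟩
    · exact frequently_interleave_left ((heα_freq α' hα').mono fun n hn => hn ▸ hxα')
    · exact frequently_interleave_right ((heβ_freq β' hβ').mono fun n hn => hn ▸ hxβ')
  case cover =>
    rintro ⟨s, t⟩ ⟨hs, ht⟩ hne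
    have hlt : s < ω ^ α ∨ t < ω ^ β := by
      contrapose! hne
      exact Prod.ext (hs.2.antisymm hne.1) (ht.2.antisymm hne.2)
    obtain ⟨n, ⟨hsn, htn⟩, hn | hn⟩ := exists_lt_and_le_succ_or ha hb
      (Order.one_le_iff_pos.1 hs.1) (Order.one_le_iff_pos.1 ht.1) hlt
    · refine ⟨2 * n, ?_, ?_⟩ <;> simp only [σ, τ, interleave_two_mul]
      exacts [⟨hsn, hn⟩, ⟨htn, ht.2.trans le_add_self⟩]
    · refine ⟨2 * n + 1, ?_, ?_⟩ <;> simp only [σ, τ, interleave_two_mul_add_one]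
      exacts [⟨hsn, hs.2.trans le_add_self⟩, ⟨htn, hn⟩]

theorem coversOpowBox_nadd {α β : Ordinal.{u}} (hα : (Iio α).Countable) (hβ : (Iio β).Countable) :
    CoversOpowBox (α ♯ β) α β := by
  induction α using WellFoundedLT.induction generalizing β with
  | _ α ihα =>
  induction β using WellFoundedLT.induction with
  | _ β ihβ =>
  rcases eq_zero_or_pos α with rfl | hα0
  · rw [zero_nadd]; exact (coversOpowBox_self_zero β).symm
  rcases eq_zero_or_pos β with rfl | hβ0
  · rw [nadd_zero]; exact coversOpowBox_self_zero α
  exact coversOpowBox_nadd_of_forall_lt hα hβ hα0 hβ0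
    (fun α' h => ihα α' h (hα.mono (Iio_subset_Iio h.le)) hβ)
    (fun β' h => ihβ β' h (hβ.mono (Iio_subset_Iio h.le)))

end Ordinal

section overlapMap

variable {K L M : Type*} [TopologicalSpace K] [TopologicalSpace L] [TopologicalSpace M]
  {𝕜 : Type*} [RCLike 𝕜]

def overlapMap (π : C(M, K × L)) (f : C(K, 𝕜)) (g : C(L, 𝕜)) : C(M, 𝕜) :=
  ⟨fun r => (f (π r).1 + g (π r).2) / 2, by fun_prop⟩

@[simp] theorem overlapMap_apply (π : C(M, K × L)) (f : C(K, 𝕜)) (g : C(L, 𝕜)) (r : M) :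
    overlapMap π f g r = (f (π r).1 + g (π r).2) / 2 := rfl

theorem overlapMap_add (π : C(M, K × L)) (f₁ f₂ : C(K, 𝕜)) (g₁ g₂ : C(L, 𝕜)) :
    overlapMap π (f₁ + f₂) (g₁ + g₂) = overlapMap π f₁ g₁ + overlapMap π f₂ g₂ := by
  ext r
  simp only [overlapMap_apply, ContinuousMap.add_apply]
  ring

theorem overlapMap_smul (π : C(M, K × L)) (f : C(K, 𝕜)) (g : C(L, 𝕜)) (l : ℝ) :
    overlapMap π (l • f) (l • g) = l • overlapMap π f g := by
  ext r
  simp only [overlapMap_apply, ContinuousMap.smul_apply, RCLike.real_smul_eq_coe_mul]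
  ring

theorem norm_overlapMap_le [CompactSpace K] [CompactSpace L] [CompactSpace M] (π : C(M, K × L))
    (f : C(K, 𝕜)) (g : C(L, 𝕜)) : ‖overlapMap π f g‖ ≤ (‖f‖ + ‖g‖) / 2 := by
  refine (ContinuousMap.norm_le _ (by positivity)).2 fun r => ?_
  rw [overlapMap_apply, norm_div, RCLike.norm_two]
  gcongr
  exact (norm_add_le _ _).trans (add_le_add (f.norm_coe_le_norm _) (g.norm_coe_le_norm _))

end overlapMap

/-- For every pair of countable ordinals `α, β < ω₁` and scalars
`𝕜 ∈ {ℝ, ℂ}`, there is an "overlapping map"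
`U : C([1, ω^α]) × C([1, ω^β]) → C([1, ω^(α ⊕ β)])` (with `α ⊕ β` the natural/Hessenberg sum,
written `α ♯ β`) that is jointly additive, jointly homogeneous for real scalars, satisfies
`‖U f g‖ ≤ (‖f‖ + ‖g‖)/2`, realizes every average `(f s + g t)/2` at some point, and whose
every value is of this form. -/
theorem overlapping_map_exists {𝕜 : Type*} [RCLike 𝕜]
    (α β : Ordinal.{0}) (hα : α.card ≤ Cardinal.aleph0) (hβ : β.card ≤ Cardinal.aleph0) :
    ∃ U : C(Set.Icc (1 : Ordinal.{0}) (Ordinal.omega0 ^ α), 𝕜) →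
          C(Set.Icc (1 : Ordinal.{0}) (Ordinal.omega0 ^ β), 𝕜) →
          C(Set.Icc (1 : Ordinal.{0}) (Ordinal.omega0 ^ (α ♯ β)), 𝕜),
      (∀ f₁ f₂ g₁ g₂, U (f₁ + f₂) (g₁ + g₂) = U f₁ g₁ + U f₂ g₂) ∧
      (∀ f g (l : ℝ), U (l • f) (l • g) = l • U f g) ∧
      (∀ f g, ‖U f g‖ ≤ (‖f‖ + ‖g‖) / 2) ∧
      (∀ (s : Set.Icc (1 : Ordinal.{0}) (Ordinal.omega0 ^ α))
         (t : Set.Icc (1 : Ordinal.{0}) (Ordinal.omega0 ^ β)),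
         ∃ r, ∀ f g, U f g r = (f s + g t) / 2) ∧
      (∀ r : Set.Icc (1 : Ordinal.{0}) (Ordinal.omega0 ^ (α ♯ β)),
         ∃ s t, ∀ f g, U f g r = (f s + g t) / 2) := by
  obtain ⟨π, hπ⟩ :=
    (Ordinal.coversOpowBox_nadd (Ordinal.countable_Iio hα)
      (Ordinal.countable_Iio hβ)).exists_surjective
  refine ⟨overlapMap π, overlapMap_add π, overlapMap_smul π, norm_overlapMap_le π,
    fun s t => ?_, fun r => ⟨(π r).1, (π r).2, fun f g => rfl⟩⟩
  obtain ⟨r, hr⟩ := hπ (s, t)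
  exact ⟨r, fun f g => by rw [overlapMap_apply, hr]⟩

end
end

section
/- Let 𝕜 ∈ {ℝ, ℂ}. The space C([0, ω]) contains no infinite-dimensional subspace that does SPR, whereas the space C([0, ω] × [0, ω]) contains an infinite-dimensional closed subspace that does SPR. -/
open scoped ZeroAtInfty

noncomputable section

/-!
In `C([0, ω])`, an infinite-dimensional subspace contains, for every `ε > 0`, unit vectors `f`, `g`
with `min ‖f x‖ ‖g x‖ ≤ ε` everywhere: take `f` vanishing at `ω`, so that `‖f n‖ ≤ ε` for `n ≥ N`,
and then `g` vanishing at `0, …, N - 1`. Then `|f + g|` and `|f - g|` are `2ε`-close, while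
`f + g` stays at distance `≥ 1 - 2ε` from every unimodular multiple of `f - g`.

In `C([0, ω]²)`, the functions with `F (ω, ω) = 0`, `F (ω, n) = F (n, ω)` and
`F (m, n) = F (m, ω) + τ m n * F (n, ω)`, where `τ m n` is `I` for `m < n` and `1` otherwise, form
a closed infinite-dimensional subspace. Such an `F` is determined by its edge `a n = F (n, ω)`, with
`‖F‖ ≤ 2 ‖a‖`. By polarization, `|F|` determines every `conj (a m) * a n` stably, hence `a` up to a
global phase, which is read off at an index where `‖a n‖` is maximal.
-/

open Filter Topology ComplexConjugate

theorem abs_norm_add_sub_norm_sub_le_two_mul_min {E : Type*} [SeminormedAddCommGroup E]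
    (p q : E) : |‖p + q‖ - ‖p - q‖| ≤ 2 * min ‖p‖ ‖q‖ := by
  have key (p q : E) : |‖p + q‖ - ‖p - q‖| ≤ 2 * ‖q‖ :=
    calc |‖p + q‖ - ‖p - q‖| ≤ ‖(p + q) - (p - q)‖ := abs_norm_sub_norm_le _ _
      _ = ‖q + q‖ := by rw [add_sub_sub_cancel]
      _ ≤ 2 * ‖q‖ := by linarith [norm_add_le q q]
  rw [mul_min_of_nonneg _ _ zero_le_two]
  exact le_min (by simpa only [add_comm, norm_sub_rev] using key q p) (key p q)

theorem abs_sq_sub_sq_le {s t M ε : ℝ} (hs : 0 ≤ s) (ht : 0 ≤ t) (hsM : s ≤ M) (htM : t ≤ M)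
    (h : |s - t| ≤ ε) : |s ^ 2 - t ^ 2| ≤ 2 * M * ε := by
  rw [sq_sub_sq, abs_mul, abs_of_nonneg (add_nonneg hs ht)]
  nlinarith [abs_nonneg (s - t)]

theorem Submodule.exists_norm_eq_one_map_eq_zero {𝕜 V W : Type*} [RCLike 𝕜]
    [NormedAddCommGroup V] [NormedSpace 𝕜 V] [AddCommGroup W] [Module 𝕜 W]
    [FiniteDimensional 𝕜 W] (E : Submodule 𝕜 V) (hE : ¬FiniteDimensional 𝕜 E)
    (Φ : V →ₗ[𝕜] W) : ∃ f ∈ E, ‖f‖ = 1 ∧ Φ f = 0 := by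
  have hker : LinearMap.ker (Φ.comp E.subtype) ≠ ⊥ := fun h =>
    hE (Module.Finite.of_injective _ (LinearMap.ker_eq_bot.1 h))
  obtain ⟨⟨f, hfE⟩, hf, hf0⟩ := (Submodule.ne_bot_iff _).1 hker
  have hf0' : f ≠ 0 := fun h => hf0 (Subtype.ext h)
  refine ⟨(‖f‖⁻¹ : 𝕜) • f, E.smul_mem _ hfE, norm_smul_inv_norm hf0', ?_⟩
  rw [map_smul, show Φ f = 0 from hf, smul_zero]

theorem ContinuousMap.exists_norm_apply_eq_norm {K E : Type*} [TopologicalSpace K]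
    [CompactSpace K] [Nonempty K] [SeminormedAddCommGroup E] (f : C(K, E)) :
    ∃ x, ‖f x‖ = ‖f‖ := by
  obtain ⟨x, -, hx⟩ :=
    isCompact_univ.exists_isMaxOn Set.univ_nonempty f.continuous.norm.continuousOn
  exact ⟨x, (f.norm_coe_le_norm x).antisymm ((f.norm_le (norm_nonneg _)).2 fun y => hx trivial)⟩

namespace RCLike

variable {𝕜 : Type*} [RCLike 𝕜]

theorem norm_I_le_one : ‖(I : 𝕜)‖ ≤ 1 := by
  rw [norm_I]; split_ifs <;> norm_num

theorem norm_le_abs_re_add_abs_im (z : 𝕜) : ‖z‖ ≤ |re z| + |im z| :=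
  calc ‖z‖ = ‖(re z : 𝕜) + im z * I‖ := by rw [re_add_im]
    _ ≤ |re z| + |im z| * ‖(I : 𝕜)‖ := by
      rw [← norm_ofReal (K := 𝕜), ← norm_ofReal (K := 𝕜), ← norm_mul]; exact norm_add_le _ _
    _ ≤ |re z| + |im z| := by
      gcongr; exact mul_le_of_le_one_right (abs_nonneg _) norm_I_le_one

theorem norm_add_mul_sq (p q c : 𝕜) :
    ‖p + c * q‖ ^ 2 = ‖p‖ ^ 2 + ‖c‖ ^ 2 * ‖q‖ ^ 2 + 2 * re (c * (conj p * q)) := by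
  rw [norm_add_sq (𝕜 := 𝕜), inner_apply, norm_mul]
  ring_nf

theorem abs_re_mul_conj_mul_sub_le {p q r s c : 𝕜} {M ε : ℝ} (hc : ‖c‖ ≤ 1)
    (hp : ‖p‖ ≤ M) (hq : ‖q‖ ≤ M) (hr : ‖r‖ ≤ M) (hs : ‖s‖ ≤ M)
    (hpr : |‖p‖ - ‖r‖| ≤ ε) (hqs : |‖q‖ - ‖s‖| ≤ ε)
    (hmeas : |‖p + c * q‖ - ‖r + c * s‖| ≤ ε) :
    |re (c * (conj p * q - conj r * s))| ≤ 4 * M * ε := by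
  have hcq : ‖c * q‖ ≤ M := by
    rw [norm_mul]; exact (mul_le_of_le_one_left (norm_nonneg _) hc).trans hq
  have hcs : ‖c * s‖ ≤ M := by
    rw [norm_mul]; exact (mul_le_of_le_one_left (norm_nonneg _) hc).trans hs
  have h₁ := abs_sq_sub_sq_le (norm_nonneg _) (norm_nonneg _)
    ((norm_add_le _ _).trans (add_le_add hp hcq)) ((norm_add_le _ _).trans (add_le_add hr hcs))
    hmeas
  have h₂ := abs_sq_sub_sq_le (norm_nonneg _) (norm_nonneg _) hp hr hpr
  have h₃ := abs_sq_sub_sq_le (norm_nonneg _) (norm_nonneg _) hq hs hqs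
  have hc2 : ‖c‖ ^ 2 ≤ 1 := pow_le_one₀ (norm_nonneg _) hc
  rw [norm_add_mul_sq, norm_add_mul_sq] at h₁
  rw [mul_sub, map_sub]
  rw [abs_le] at *
  constructor <;> nlinarith [sq_nonneg ‖c‖]

/-- The phase is `l = x * conj u / (‖x‖ * ‖u‖)`, so that `conj x * l = (‖x‖ / ‖u‖) * conj u`. -/
theorem exists_norm_eq_one_norm_mul_norm_sub_mul_le {x u : 𝕜} (hx : x ≠ 0) (hu : u ≠ 0) :
    ∃ l : 𝕜, ‖l‖ = 1 ∧ ∀ y v : 𝕜,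
      ‖x‖ * ‖y - l * v‖ ≤ ‖conj x * y - conj u * v‖ + |‖x‖ - ‖u‖| * ‖v‖ := by
  have hx' : (‖x‖ : 𝕜) ≠ 0 := ofReal_ne_zero.2 (norm_ne_zero_iff.2 hx)
  have hu' : (‖u‖ : 𝕜) ≠ 0 := ofReal_ne_zero.2 (norm_ne_zero_iff.2 hu)
  refine ⟨x * conj u / (‖x‖ * ‖u‖), ?_, fun y v => ?_⟩
  · rw [norm_div, norm_mul, norm_mul, norm_conj, norm_ofReal, norm_ofReal, abs_norm, abs_norm]
    exact div_self (mul_ne_zero (norm_ne_zero_iff.2 hx) (norm_ne_zero_iff.2 hu))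
  have key : conj x * (y - x * conj u / (‖x‖ * ‖u‖) * v) =
      (conj x * y - conj u * v) + ((‖u‖ : 𝕜) - ‖x‖) / ‖u‖ * (conj u * v) := by
    have := conj_mul x
    field_simp
    linear_combination (-conj u * v) * this
  calc ‖x‖ * ‖y - x * conj u / (‖x‖ * ‖u‖) * v‖
      = ‖conj x * (y - x * conj u / (‖x‖ * ‖u‖) * v)‖ := by rw [norm_mul, norm_conj]
    _ ≤ ‖conj x * y - conj u * v‖ + |‖x‖ - ‖u‖| * ‖v‖ := by
      rw [key]
      refine (norm_add_le _ _).trans (le_of_eq ?_)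
      rw [norm_mul, norm_div, norm_mul, norm_conj, ← ofReal_sub, norm_ofReal, norm_ofReal,
        abs_norm, abs_sub_comm]
      field_simp [norm_ne_zero_iff.2 hu]

end RCLike

section PhaseRetrieval

variable {K : Type*} [TopologicalSpace K] [CompactSpace K] {𝕜 : Type*} [RCLike 𝕜]

theorem norm_cmAbs_sub_cmAbs_le_iff {f g : C(K, 𝕜)} {c : ℝ} (hc : 0 ≤ c) :
    ‖cmAbs f - cmAbs g‖ ≤ c ↔ ∀ x, |‖f x‖ - ‖g x‖| ≤ c :=
  ContinuousMap.norm_le _ hc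

theorem sprInf_le (f g : C(K, 𝕜)) {l : 𝕜} (hl : ‖l‖ = 1) : sprInf f g ≤ ‖f - l • g‖ :=
  ciInf_le ⟨0, by rintro _ ⟨_, rfl⟩; exact norm_nonneg _⟩ (⟨l, hl⟩ : {c : 𝕜 // ‖c‖ = 1})

theorem le_sprInf {f g : C(K, 𝕜)} {c : ℝ} (h : ∀ l : 𝕜, ‖l‖ = 1 → c ≤ ‖f - l • g‖) :
    c ≤ sprInf f g :=
  have : Nonempty {c : 𝕜 // ‖c‖ = 1} := ⟨⟨1, norm_one⟩⟩
  le_ciInf fun l => h l l.2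

theorem norm_cmAbs_add_sub_cmAbs_sub_le {f g : C(K, 𝕜)} {ε : ℝ} (hε : 0 ≤ ε)
    (hfg : ∀ x, min ‖f x‖ ‖g x‖ ≤ ε) : ‖cmAbs (f + g) - cmAbs (f - g)‖ ≤ 2 * ε :=
  (norm_cmAbs_sub_cmAbs_le_iff (by positivity)).2 fun x =>
    (abs_norm_add_sub_norm_sub_le_two_mul_min (f x) (g x)).trans (by linarith [hfg x])

theorem norm_one_sub_sub_two_mul_le {f g : C(K, 𝕜)} {ε : ℝ} {l : 𝕜} (hl : ‖l‖ = 1) {x : K}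
    (hfx : ‖f x‖ = 1) (hgx : ‖g x‖ ≤ ε) : ‖1 - l‖ - 2 * ε ≤ ‖(f + g) - l • (f - g)‖ := by
  have h1l : ‖1 + l‖ ≤ 2 := (norm_add_le _ _).trans (by rw [norm_one, hl]; norm_num)
  calc ‖1 - l‖ - 2 * ε ≤ ‖(1 - l) * f x‖ - ‖(1 + l) * g x‖ := by
        rw [norm_mul, norm_mul, hfx, mul_one]
        nlinarith [norm_nonneg (g x), norm_nonneg (1 + l)]
    _ ≤ ‖(1 - l) * f x + (1 + l) * g x‖ := norm_sub_le_norm_add _ _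
    _ = ‖((f + g) - l • (f - g)) x‖ := by
        simp only [ContinuousMap.sub_apply, ContinuousMap.add_apply, ContinuousMap.smul_apply,
          smul_eq_mul]
        ring_nf
    _ ≤ ‖(f + g) - l • (f - g)‖ := ContinuousMap.norm_coe_le_norm _ _

theorem one_sub_two_mul_le_sprInf_add_sub {f g : C(K, 𝕜)} {ε : ℝ} (hf : ‖f‖ = 1)
    (hg : ‖g‖ = 1) (hfg : ∀ x, min ‖f x‖ ‖g x‖ ≤ ε) : 1 - 2 * ε ≤ sprInf (f + g) (f - g) := by
  have : Nonempty K := not_isEmpty_iff.1 fun _ => by simp [Subsingleton.elim f 0] at hf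
  obtain ⟨x, hx⟩ := f.exists_norm_apply_eq_norm
  obtain ⟨y, hy⟩ := g.exists_norm_apply_eq_norm
  have hgx : ‖g x‖ ≤ ε := by
    rw [← min_eq_right ((g.norm_coe_le_norm x).trans (hg.trans (hx.trans hf).symm).le)]
    exact hfg x
  have hfy : ‖f y‖ ≤ ε := by
    rw [← min_eq_left ((f.norm_coe_le_norm y).trans (hf.trans (hy.trans hg).symm).le)]
    exact hfg y
  refine le_sprInf fun l hl => ?_
  have h₁ := norm_one_sub_sub_two_mul_le hl (hx.trans hf) hgx
  have h₂ := norm_one_sub_sub_two_mul_le (l := -l) (by rwa [norm_neg]) (hy.trans hg) hfy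
  rw [sub_neg_eq_add, show (g + f) - (-l) • (g - f) = (f + g) - l • (f - g) by module] at h₂
  have : (2 : ℝ) ≤ ‖1 - l‖ + ‖1 + l‖ := by
    simpa [show (1 - l) + (1 + l) = (2 : 𝕜) by ring] using norm_add_le (1 - l) (1 + l)
  linarith

theorem DoesCSPR.one_sub_two_mul_le {E : Submodule 𝕜 C(K, 𝕜)} {C ε : ℝ} (hE : DoesCSPR E C)
    (hC : 0 ≤ C) (hε : 0 ≤ ε) {f g : C(K, 𝕜)} (hfE : f ∈ E) (hgE : g ∈ E) (hf : ‖f‖ = 1)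
    (hg : ‖g‖ = 1) (hfg : ∀ x, min ‖f x‖ ‖g x‖ ≤ ε) : 1 - 2 * ε ≤ C * (2 * ε) :=
  calc 1 - 2 * ε ≤ sprInf (f + g) (f - g) := one_sub_two_mul_le_sprInf_add_sub hf hg hfg
    _ ≤ C * ‖cmAbs (f + g) - cmAbs (f - g)‖ := hE _ (E.add_mem hfE hgE) _ (E.sub_mem hfE hgE)
    _ ≤ C * (2 * ε) := mul_le_mul_of_nonneg_left (norm_cmAbs_add_sub_cmAbs_sub_le hε hfg) hC

end PhaseRetrieval

abbrev IccOmega : Type 1 := Set.Icc (0 : Ordinal.{0}) Ordinal.omega0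

namespace IccOmega

open RCLike

def nat (n : ℕ) : IccOmega := ⟨n, zero_le, (Ordinal.natCast_lt_omega0 n).le⟩

def omega : IccOmega := ⟨Ordinal.omega0, zero_le, le_rfl⟩

instance : Nonempty IccOmega := ⟨omega⟩

theorem nat_injective : Function.Injective nat := fun m n h => by
  simpa [nat] using congrArg Subtype.val h

theorem nat_ne_omega (n : ℕ) : nat n ≠ omega := fun h =>
  (Ordinal.natCast_lt_omega0 n).ne (congrArg Subtype.val h)

theorem eq_omega_or_eq_nat (x : IccOmega) : x = omega ∨ ∃ n, x = nat n := by
  rcases x.2.2.lt_or_eq with h | h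
  · obtain ⟨n, hn⟩ := Ordinal.lt_omega0.1 h
    exact Or.inr ⟨n, Subtype.ext hn⟩
  · exact Or.inl (Subtype.ext h)

theorem tendsto_nat : Tendsto nat atTop (𝓝 omega) := by
  rw [nhds_subtype_eq_comap, tendsto_comap_iff]
  refine tendsto_order.2 ⟨fun a ha => ?_, fun a ha => .of_forall fun n => ?_⟩
  · obtain ⟨k, rfl⟩ := Ordinal.lt_omega0.1 ha
    filter_upwards [eventually_gt_atTop k] with n hn
    exact Nat.cast_lt.2 hn
  · exact (Ordinal.natCast_lt_omega0 n).trans ha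

theorem isClopen_singleton_nat (k : ℕ) : IsClopen {nat k} := by
  refine ⟨isClosed_singleton, ?_⟩
  have : ({nat k} : Set IccOmega) = Subtype.val ⁻¹' {(k : Ordinal)} := by
    ext x; simp [nat, Subtype.ext_iff]
  rw [this]
  refine (SuccOrder.isOpen_singleton_iff.2 fun hlim => ?_).preimage continuous_subtype_val
  exact (Ordinal.natCast_lt_omega0 k).not_ge (Ordinal.omega0_le_of_isSuccLimit hlim)

theorem isClopen_setOf_lt_nat (k : ℕ) : IsClopen {x : IccOmega | x.1 < k} := by
  refine ⟨?_, isOpen_Iio.preimage continuous_subtype_val⟩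
  cases k with
  | zero => simp
  | succ j =>
    have : {x : IccOmega | x.1 < (j + 1 : ℕ)} = {x | x.1 ≤ (j : Ordinal)} := by
      ext x; simp [Order.lt_add_one_iff]
    exact this ▸ isClosed_le continuous_subtype_val continuous_const

variable {𝕜 : Type*} [RCLike 𝕜]

theorem finiteDimensional_of_doesSPR (E : Submodule 𝕜 C(IccOmega, 𝕜)) (hE : DoesSPR E) :
    FiniteDimensional 𝕜 E := by
  by_contra hfin
  obtain ⟨C, hC, hCE⟩ := hE
  obtain ⟨ε, hε, hεC⟩ : ∃ ε : ℝ, 0 < ε ∧ 2 * ε * (1 + C) < 1 :=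
    ⟨1 / (4 * (1 + C)), by positivity, by field_simp; linarith⟩
  obtain ⟨f, hfE, hf, hfω⟩ :=
    E.exists_norm_eq_one_map_eq_zero hfin (ContinuousMap.evalCLM 𝕜 omega).toLinearMap
  replace hfω : f omega = 0 := hfω
  obtain ⟨N, hN⟩ : ∃ N, ∀ n ≥ N, ‖f (nat n)‖ ≤ ε := by
    have := ((f.continuous.tendsto omega).comp tendsto_nat).norm
    rw [hfω, norm_zero] at this
    exact eventually_atTop.1 (this.eventually (eventually_le_nhds hε))
  obtain ⟨g, hgE, hg, hgN⟩ := E.exists_norm_eq_one_map_eq_zero hfin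
    (LinearMap.pi fun i : Fin N => (ContinuousMap.evalCLM 𝕜 (nat i)).toLinearMap)
  have hfg (x : IccOmega) : min ‖f x‖ ‖g x‖ ≤ ε := by
    rcases eq_omega_or_eq_nat x with rfl | ⟨n, rfl⟩
    · exact (min_le_left _ _).trans (by simpa [hfω] using hε.le)
    rcases lt_or_ge n N with hn | hn
    · have hgn : g (nat n) = 0 := congrFun hgN ⟨n, hn⟩
      exact (min_le_right _ _).trans (by simpa [hgn] using hε.le)
    · exact (min_le_left _ _).trans (hN n hn)
  have := hCE.one_sub_two_mul_le (by linarith) hε.le hfE hgE hf hg hfg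
  linarith

/-- Over `ℝ`, `I = 0`, and then only real parts of the products `conj (a m) * a n` are needed. -/
def twist (m n : ℕ) : 𝕜 := if m < n then I else 1

theorem norm_twist_le_one (m n : ℕ) : ‖(twist m n : 𝕜)‖ ≤ 1 := by
  unfold twist; split_ifs
  exacts [norm_I_le_one, norm_one.le]

theorem norm_le_two_mul_of_abs_re_twist_le {m n : ℕ} (hmn : m ≠ n) {z : 𝕜} {δ : ℝ}
    (h₁ : |re (twist m n * z)| ≤ δ) (h₂ : |re (twist n m * conj z)| ≤ δ) : ‖z‖ ≤ 2 * δ := by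
  have key : |re z| ≤ δ ∧ |im z| ≤ δ := by
    rcases hmn.lt_or_gt with h | h
    · simp only [twist, h, h.not_gt, if_true, if_false, one_mul, I_mul_re, abs_neg,
        conj_re] at h₁ h₂
      exact ⟨h₂, h₁⟩
    · simp only [twist, h, h.not_gt, if_true, if_false, one_mul, I_mul_re, abs_neg,
        conj_im] at h₁ h₂
      exact ⟨h₁, h₂⟩
  linarith [norm_le_abs_re_add_abs_im z]

/-- Polarization: of the twists `twist m n` and `twist n m` of two distinct indices, one is `1`
and the other is `I`, so the moduli at `(m, n)` and `(n, m)` control both the real and the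
imaginary part of `conj (a m) * a n`. -/
theorem norm_conj_mul_sub_conj_mul_le {a b : ℕ → 𝕜} {M ε : ℝ} (ha : ∀ n, ‖a n‖ ≤ M)
    (hb : ∀ n, ‖b n‖ ≤ M) (hab : ∀ n, |‖a n‖ - ‖b n‖| ≤ ε)
    (hmeas : ∀ m n, |‖a m + twist m n * a n‖ - ‖b m + twist m n * b n‖| ≤ ε) (m n : ℕ) :
    ‖conj (a m) * a n - conj (b m) * b n‖ ≤ 8 * M * ε := by
  have hMε : 0 ≤ M * ε :=
    mul_nonneg ((norm_nonneg _).trans (ha 0)) ((abs_nonneg _).trans (hab 0))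
  have hcross (m n : ℕ) := abs_re_mul_conj_mul_sub_le (norm_twist_le_one m n)
    (ha m) (ha n) (hb m) (hb n) (hab m) (hab n) (hmeas m n)
  rcases eq_or_ne m n with rfl | hmn
  · rw [RCLike.conj_mul, RCLike.conj_mul, ← ofReal_pow, ← ofReal_pow, ← ofReal_sub, norm_ofReal]
    linarith [abs_sq_sub_sq_le (norm_nonneg _) (norm_nonneg _) (ha m) (hb m) (hab m)]
  · refine (norm_le_two_mul_of_abs_re_twist_le hmn (hcross m n) ?_).trans (by linarith)
    convert hcross n m using 4
    simp only [map_sub, map_mul, conj_conj]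
    ring

def sprSubspace : Submodule 𝕜 C(IccOmega × IccOmega, 𝕜) where
  carrier := {F | (∀ m n, F (nat m, nat n) = F (nat m, omega) + twist m n * F (nat n, omega)) ∧
    (∀ n, F (omega, nat n) = F (nat n, omega)) ∧ F (omega, omega) = 0}
  add_mem' := by
    rintro F G ⟨hF₁, hF₂, hF₃⟩ ⟨hG₁, hG₂, hG₃⟩
    refine ⟨fun m n => ?_, fun n => ?_, ?_⟩
    · simp only [ContinuousMap.add_apply, hF₁, hG₁]; ring
    · simp only [ContinuousMap.add_apply, hF₂, hG₂]
    · simp only [ContinuousMap.add_apply, hF₃, hG₃, add_zero]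
  zero_mem' := by simp
  smul_mem' := by
    rintro c F ⟨hF₁, hF₂, hF₃⟩
    refine ⟨fun m n => ?_, fun n => ?_, ?_⟩
    · simp only [ContinuousMap.smul_apply, hF₁, smul_eq_mul]; ring
    · simp only [ContinuousMap.smul_apply, hF₂]
    · simp only [ContinuousMap.smul_apply, hF₃, smul_zero]

theorem isClosed_sprSubspace :
    IsClosed (sprSubspace (𝕜 := 𝕜) : Set C(IccOmega × IccOmega, 𝕜)) := by
  have hev (z : IccOmega × IccOmega) : Continuous fun F : C(IccOmega × IccOmega, 𝕜) => F z :=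
    continuous_eval_const z
  simp only [sprSubspace, Submodule.coe_set_mk, AddSubmonoid.coe_set_mk,
    AddSubsemigroup.coe_set_mk, Set.ofPred_and, Set.ofPred_forall]
  exact (isClosed_iInter fun m => isClosed_iInter fun n =>
      isClosed_eq (hev _) ((hev _).add (continuous_const.mul (hev _)))).inter
    ((isClosed_iInter fun n => isClosed_eq (hev _) (hev _)).inter
      (isClosed_eq (hev _) continuous_const))

def edge : C(IccOmega × IccOmega, 𝕜) →ₗ[𝕜] C(IccOmega, 𝕜) where
  toFun F := F.comp ((ContinuousMap.id _).prodMk (.const _ omega))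
  map_add' _ _ := rfl
  map_smul' _ _ := rfl

@[simp]
theorem edge_apply (F : C(IccOmega × IccOmega, 𝕜)) (x : IccOmega) : edge F x = F (x, omega) :=
  rfl

theorem norm_le_two_mul_norm_edge {F : C(IccOmega × IccOmega, 𝕜)} (hF : F ∈ sprSubspace) :
    ‖F‖ ≤ 2 * ‖edge F‖ := by
  obtain ⟨hF₁, hF₂, hF₃⟩ := hF
  have hedge (x : IccOmega) : ‖F (x, omega)‖ ≤ ‖edge F‖ := (edge F).norm_coe_le_norm x
  have h0 := norm_nonneg (edge F)
  refine (F.norm_le (by positivity)).2 fun ⟨x, y⟩ => ?_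
  rcases eq_omega_or_eq_nat x with rfl | ⟨m, rfl⟩ <;>
    rcases eq_omega_or_eq_nat y with rfl | ⟨n, rfl⟩
  · simp [hF₃, h0]
  · rw [hF₂]; linarith [hedge (nat n)]
  · linarith [hedge (nat m)]
  · rw [hF₁]
    calc ‖F (nat m, omega) + twist m n * F (nat n, omega)‖
        ≤ ‖F (nat m, omega)‖ + 1 * ‖F (nat n, omega)‖ := by
          refine (norm_add_le _ _).trans ?_
          rw [norm_mul]; gcongr; exact norm_twist_le_one m n
      _ ≤ 2 * ‖edge F‖ := by linarith [hedge (nat m), hedge (nat n)]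

def natIndicator (k : ℕ) : C(IccOmega, 𝕜) :=
  ⟨Set.indicator {nat k} 1, (isClopen_singleton_nat k).continuous_indicator continuous_const⟩

def belowIndicator (k : ℕ) : C(IccOmega, 𝕜) :=
  ⟨Set.indicator {x | x.1 < k} 1, (isClopen_setOf_lt_nat k).continuous_indicator continuous_const⟩

@[simp]
theorem natIndicator_nat (k n : ℕ) : natIndicator k (nat n) = if n = k then (1 : 𝕜) else 0 := by
  simp [natIndicator, Pi.single_apply, nat_injective.eq_iff]

@[simp]
theorem natIndicator_omega (k : ℕ) : natIndicator k omega = (0 : 𝕜) := by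
  simp [natIndicator, (nat_ne_omega k).symm]

@[simp]
theorem belowIndicator_nat (k n : ℕ) :
    belowIndicator k (nat n) = if n < k then (1 : 𝕜) else 0 := by
  simp [belowIndicator, Set.indicator, nat]

@[simp]
theorem belowIndicator_omega (k : ℕ) : belowIndicator k omega = (0 : 𝕜) := by
  simp [belowIndicator, omega, (Ordinal.natCast_lt_omega0 k).not_gt]

/-- At `x = nat m`, the factor `1 + (I - 1) * belowIndicator k x` is `twist m k`. -/
def sprBasis (k : ℕ) : C(IccOmega × IccOmega, 𝕜) :=
  ⟨fun p => natIndicator k p.1 + (1 + (I - 1) * belowIndicator k p.1) * natIndicator k p.2,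
    by fun_prop⟩

theorem sprBasis_mem (k : ℕ) : sprBasis k ∈ sprSubspace (𝕜 := 𝕜) := by
  refine ⟨fun m n => ?_, fun n => ?_, ?_⟩ <;> simp only [sprBasis, ContinuousMap.coe_mk,
    natIndicator_nat, natIndicator_omega, belowIndicator_nat, belowIndicator_omega]
  · rcases eq_or_ne n k with rfl | hn
    · by_cases hmn : m < n <;> simp [twist, hmn]
    · simp [hn]
  all_goals simp

theorem edge_sprBasis (k : ℕ) : edge (sprBasis k) = natIndicator (𝕜 := 𝕜) k := by
  ext x; simp [sprBasis]

theorem linearIndependent_natIndicator : LinearIndependent 𝕜 (natIndicator (𝕜 := 𝕜)) := by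
  let evalNat : C(IccOmega, 𝕜) →ₗ[𝕜] ℕ → 𝕜 :=
    LinearMap.pi fun n => (ContinuousMap.evalCLM 𝕜 (nat n)).toLinearMap
  have : evalNat ∘ natIndicator = fun k => Pi.single k 1 := by
    ext k n; simp [evalNat, Pi.single_apply]
  exact .of_comp evalNat (this ▸ Pi.linearIndependent_single_one ℕ 𝕜)

theorem not_finiteDimensional_sprSubspace : ¬FiniteDimensional 𝕜 (sprSubspace (𝕜 := 𝕜)) := by
  intro hfin
  have hli : LinearIndependent 𝕜 fun k => (⟨sprBasis k, sprBasis_mem k⟩ : sprSubspace (𝕜 := 𝕜)) :=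
    .of_comp (edge.comp sprSubspace.subtype) (by
      simpa [Function.comp_def, edge_sprBasis] using linearIndependent_natIndicator)
  have := hli.finite
  exact not_finite ℕ

theorem exists_norm_eq_one_norm_edge_sub_smul_le {F G : C(IccOmega × IccOmega, 𝕜)}
    (hF : F ∈ sprSubspace) (hG : G ∈ sprSubspace) {ε : ℝ}
    (hFG : ∀ z, |‖F z‖ - ‖G z‖| ≤ ε) :
    ∃ l : 𝕜, ‖l‖ = 1 ∧ ‖edge F - l • edge G‖ ≤ 12 * ε := by
  have hε : 0 ≤ ε := (abs_nonneg _).trans (hFG (omega, omega))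
  have hGF : ‖edge G‖ ≤ ‖edge F‖ + ε := (ContinuousMap.norm_le _ (by positivity)).2 fun x => by
    have := (edge F).norm_coe_le_norm x
    rw [edge_apply] at this ⊢
    linarith [(abs_le.1 (hFG (x, omega))).1]
  by_cases hsmall : ‖edge F‖ ≤ 4 * ε
  · exact ⟨1, norm_one, by rw [one_smul]; linarith [norm_sub_le (edge F) (edge G)]⟩
  rw [not_le] at hsmall
  obtain ⟨x₀, hx₀⟩ := (edge F).exists_norm_apply_eq_norm
  obtain ⟨m, rfl⟩ : ∃ m, x₀ = nat m := by
    refine (eq_omega_or_eq_nat x₀).resolve_left ?_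
    rintro rfl
    simp only [edge_apply, hF.2.2, norm_zero] at hx₀
    linarith
  set a : ℕ → 𝕜 := fun n => F (nat n, omega)
  set b : ℕ → 𝕜 := fun n => G (nat n, omega)
  set X := ‖edge F‖
  have ha (n : ℕ) : ‖a n‖ ≤ X := (edge F).norm_coe_le_norm (nat n)
  have hb (n : ℕ) : ‖b n‖ ≤ X + ε := ((edge G).norm_coe_le_norm (nat n)).trans hGF
  have hab (n : ℕ) : |‖a n‖ - ‖b n‖| ≤ ε := hFG (nat n, omega)
  have ham : ‖a m‖ = X := hx₀
  have hbm : 3 * ε < ‖b m‖ := by linarith [(abs_le.1 (hab m)).2]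
  obtain ⟨l, hl, hlab⟩ := exists_norm_eq_one_norm_mul_norm_sub_mul_le
    (norm_pos_iff.1 (by linarith : 0 < ‖a m‖)) (norm_pos_iff.1 (by linarith : 0 < ‖b m‖))
  have hw := norm_conj_mul_sub_conj_mul_le (fun n => (ha n).trans (le_add_of_nonneg_right hε))
    hb hab (fun m n => by simpa only [hF.1 m n, hG.1 m n] using hFG (nat m, nat n)) m
  refine ⟨l, hl, (ContinuousMap.norm_le _ (by positivity)).2 fun x => ?_⟩
  rcases eq_omega_or_eq_nat x with rfl | ⟨n, rfl⟩
  · simp [hF.2.2, hG.2.2, hε]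
  have h₁ : X * ‖a n - l * b n‖ ≤ 9 * (X + ε) * ε := by
    have := hlab (a n) (b n)
    rw [ham] at this
    have := mul_le_mul (ham ▸ hab m) (hb n) (norm_nonneg _) hε
    linarith [hw n]
  have h₂ : X * ‖a n - l * b n‖ ≤ X * (12 * ε) := by nlinarith
  simpa using le_of_mul_le_mul_left h₂ (by linarith)

theorem doesCSPR_sprSubspace : DoesCSPR (sprSubspace (𝕜 := 𝕜)) 24 := by
  intro F hF G hG
  obtain ⟨l, hl, hedge⟩ := exists_norm_eq_one_norm_edge_sub_smul_le hF hG
    ((norm_cmAbs_sub_cmAbs_le_iff (norm_nonneg _)).1 le_rfl)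
  calc sprInf F G ≤ ‖F - l • G‖ := sprInf_le F G hl
    _ ≤ 2 * ‖edge (F - l • G)‖ :=
      norm_le_two_mul_norm_edge (sub_mem hF (Submodule.smul_mem _ l hG))
    _ ≤ 24 * ‖cmAbs F - cmAbs G‖ := by rw [map_sub, map_smul]; linarith

end IccOmega

/-- For `𝕜 ∈ {ℝ, ℂ}`: `C([0, ω])` contains no infinite-dimensional subspace
doing SPR, whereas `C([0, ω] × [0, ω])` contains an infinite-dimensional closed subspace doing
SPR. -/
theorem SPR_in_product_but_not_in_factor {𝕜 : Type*} [RCLike 𝕜] :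
    (∀ E : Submodule 𝕜 C(Set.Icc (0 : Ordinal.{0}) Ordinal.omega0, 𝕜),
      DoesSPR E → FiniteDimensional 𝕜 E) ∧
    ∃ E : Submodule 𝕜
        C(Set.Icc (0 : Ordinal.{0}) Ordinal.omega0 ×
          Set.Icc (0 : Ordinal.{0}) Ordinal.omega0, 𝕜),
      IsClosed (E : Set C(Set.Icc (0 : Ordinal.{0}) Ordinal.omega0 ×
          Set.Icc (0 : Ordinal.{0}) Ordinal.omega0, 𝕜)) ∧
        ¬FiniteDimensional 𝕜 E ∧ DoesSPR E := by
  exact ⟨IccOmega.finiteDimensional_of_doesSPR, IccOmega.sprSubspace,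
    IccOmega.isClosed_sprSubspace, IccOmega.not_finiteDimensional_sprSubspace,
    24, by norm_num, IccOmega.doesCSPR_sprSubspace⟩

end
end
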